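/- Exactly fifteen nonzero squarefree polynomials of degree < 8 on GF(2)^8 are invariant under the stabilizer G_S of the Segre variety: their zero sets are precisely the unions O_5 ∪ (⋃_{i∈α} O_i) over the 15 proper subsets α ⊊ {1,2,3,4}, where O_1,…,O_5 are the five G_S-orbits of points (of sizes 12, 54, 108, 54, 27 with O_5 = S). -/

import Mathlib

/-!
Over `GF(2)`, evaluation identifies squarefree polynomials in eight variables with functions
`GF(2)^8 → GF(2)`: it is injective (compare two polynomials at the indicator vector of a minimal
monomial where they differ) and both sides have `2^256` elements. Summing a monomial over all
points gives `2^(8 - deg)`, so the coefficient of `x₁⋯x₈` is the sum of all values of the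
function. An invariant polynomial without constant term is constant on each orbit and vanishes
at `0`; as `S` is the only orbit of odd size, its degree is `< 8` iff it vanishes on `S`, and it
is nonzero iff it is nonzero on one of the other four orbits. This leaves `2^4 - 1` choices.
-/

open Pointwise

/-- Index set for coordinates of `V_2 ⊗ V_2 ⊗ V_2` over `GF(2)`. -/
abbrev ι3 := Fin 2 × Fin 2 × Fin 2

/-- `V_8 = V(2,2) ⊗ V(2,2) ⊗ V(2,2)`, realized in coordinates as `GF(2)^(2×2×2)`. -/
abbrev V8 := ι3 → ZMod 2

/-- The Segre variety `S_{1,1,1}(2)`: the nonzero decomposable tensors `u ⊗ v ⊗ w`. -/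
def Segre : Set V8 :=
  {x | x ≠ 0 ∧ ∃ u v w : Fin 2 → ZMod 2, x = fun p => u p.1 * v p.2.1 * w p.2.2}

/-- The stabilizer of the Segre variety in `GL(8,2)`. -/
def SegreStab : Subgroup (V8 ≃ₗ[ZMod 2] V8) :=
  MulAction.stabilizer (V8 ≃ₗ[ZMod 2] V8) Segre

/-- Evaluation of a squarefree (multilinear) polynomial given by its coefficients. -/
def mEval (c : Finset ι3 → ZMod 2) (x : V8) : ZMod 2 :=
  ∑ s : Finset ι3, c s * ∏ i ∈ s, x i

/-- Degree of a squarefree polynomial given by its coefficients. -/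
def mDeg (c : Finset ι3 → ZMod 2) : ℕ :=
  (Finset.univ.filter fun s : Finset ι3 => c s ≠ 0).sup Finset.card

/-- A squarefree polynomial (without constant term) which is nonzero, of degree `< 8`,
and invariant under the stabilizer of the Segre variety. -/
def IsInvPoly (c : Finset ι3 → ZMod 2) : Prop :=
  c ∅ = 0 ∧ c ≠ 0 ∧ mDeg c < 8 ∧
    ∀ A : V8 ≃ₗ[ZMod 2] V8, A ∈ SegreStab → ∀ x, mEval c (A x) = mEval c x

theorem ZMod.sum_prod_eq_ite_univ {ι : Type*} [Fintype ι] [DecidableEq ι] (s : Finset ι) :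
    ∑ x : ι → ZMod 2, ∏ i ∈ s, x i = if s = Finset.univ then 1 else 0 := by
  have hsum : ∀ i, ∑ a : ZMod 2, (if i ∈ s then a else 1) = if i ∈ s then 1 else 0 := by
    intro i; split_ifs <;> decide
  calc ∑ x : ι → ZMod 2, ∏ i ∈ s, x i = ∑ x : ι → ZMod 2, ∏ i, if i ∈ s then x i else 1 := by
        simp only [Fintype.prod_ite_mem]
    _ = ∏ i, if i ∈ s then 1 else 0 := by
        rw [← Fintype.prod_sum (fun i a => if i ∈ s then a else 1)]; simp only [hsum]
    _ = if s = Finset.univ then 1 else 0 := by simp [Finset.prod_boole, Finset.eq_univ_iff_forall]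

theorem mEval_indicator (c : Finset ι3 → ZMod 2) (t : Finset ι3) :
    mEval c (fun i => if i ∈ t then 1 else 0) = ∑ s ∈ t.powerset, c s := by
  simp only [mEval, Finset.prod_boole, mul_ite, mul_one, mul_zero, ← Finset.sum_filter]
  congr 1; ext s; simp [Finset.subset_iff]

theorem mEval_apply_zero (c : Finset ι3 → ZMod 2) : mEval c 0 = c ∅ := by
  rw [mEval, Finset.sum_eq_single ∅] <;> simp +contextual

theorem sum_mEval (c : Finset ι3 → ZMod 2) : ∑ x, mEval c x = c Finset.univ := by
  simp only [mEval]
  rw [Finset.sum_comm]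
  simp [← Finset.mul_sum, ZMod.sum_prod_eq_ite_univ]

theorem mDeg_lt_eight_iff (c : Finset ι3 → ZMod 2) : mDeg c < 8 ↔ c Finset.univ = 0 := by
  rw [mDeg, Finset.sup_lt_iff (by norm_num)]
  constructor
  · intro h
    by_contra hc
    simpa using h _ (Finset.mem_filter.2 ⟨Finset.mem_univ _, hc⟩)
  · intro h s hs
    have hs : s ≠ Finset.univ := fun e => (Finset.mem_filter.1 hs).2 (e ▸ h)
    simpa using Finset.card_lt_card (Finset.ssubset_univ_iff.2 hs)

theorem mEval_injective : Function.Injective mEval := by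
  intro c c' h
  by_contra hne
  obtain ⟨s, hs⟩ := Finset.exists_minimal (s := Finset.univ.filter fun s => c s ≠ c' s)
    (by simpa [Finset.filter_nonempty_iff, funext_iff] using hne)
  have hbelow : ∀ u ∈ s.powerset.erase s, c u = c' u := fun u hu => by
    by_contra hne
    exact hs.not_lt (by simpa using hne)
      ((Finset.mem_powerset.1 (Finset.mem_of_mem_erase hu)).lt_of_ne (Finset.ne_of_mem_erase hu))
  have hs_eval := congrFun h fun i => if i ∈ s then 1 else 0
  rw [mEval_indicator, mEval_indicator, ← Finset.add_sum_erase _ _ (Finset.mem_powerset_self s),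
    ← Finset.add_sum_erase _ _ (Finset.mem_powerset_self s), Finset.sum_congr rfl hbelow] at hs_eval
  exact (Finset.mem_filter.1 hs.prop).2 (add_right_cancel hs_eval)

theorem mEval_bijective : Function.Bijective mEval :=
  (Fintype.bijective_iff_injective_and_card _).2 ⟨mEval_injective, by simp [Fintype.card_finset]⟩

theorem mEval_zero : mEval 0 = 0 := by
  funext x; simp [mEval]

def IsInvFun (F : V8 → ZMod 2) : Prop :=
  F 0 = 0 ∧ F ≠ 0 ∧ ∑ x, F x = 0 ∧
    ∀ A : V8 ≃ₗ[ZMod 2] V8, A ∈ SegreStab → ∀ x, F (A x) = F x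

theorem isInvPoly_iff_isInvFun (c : Finset ι3 → ZMod 2) : IsInvPoly c ↔ IsInvFun (mEval c) := by
  rw [IsInvPoly, IsInvFun, mEval_apply_zero, sum_mEval, mDeg_lt_eight_iff,
    mEval_injective.ne_iff' mEval_zero]

section PiecewiseConst

open Function

variable {X κ R : Type*} [Fintype κ] [AddCommMonoid R]

noncomputable def piecewiseConst (O : κ → Set X) (b : κ → R) (x : X) : R :=
  ∑ i, (O i).indicator (fun _ => b i) x

theorem piecewiseConst_of_mem {O : κ → Set X} (hO : Pairwise (Disjoint on O)) (b : κ → R)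
    {i : κ} {x : X} (hx : x ∈ O i) : piecewiseConst O b x = b i := by
  rw [piecewiseConst, Finset.sum_eq_single i (fun j _ hji => Set.indicator_of_notMem
    (Set.disjoint_left.1 (hO hji.symm) hx) _) (by simp), Set.indicator_of_mem hx]

theorem piecewiseConst_of_forall_notMem (O : κ → Set X) (b : κ → R) {x : X}
    (hx : ∀ i, x ∉ O i) : piecewiseConst O b x = 0 :=
  Finset.sum_eq_zero fun i _ => Set.indicator_of_notMem (hx i) _

theorem piecewiseConst_comp {O : κ → Set X} (b : κ → R) {f : X → X}
    (hf : ∀ i, f ⁻¹' O i = O i) (x : X) : piecewiseConst O b (f x) = piecewiseConst O b x := by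
  simp only [piecewiseConst, ← Set.indicator_comp_right f (s := O _), hf]
  rfl

theorem sum_piecewiseConst [Fintype X] (O : κ → Set X) (b : κ → R) :
    ∑ x, piecewiseConst O b x = ∑ i, (O i).ncard • b i := by
  classical
  simp only [piecewiseConst, Set.indicator_apply]
  rw [Finset.sum_comm]
  simp [Finset.sum_ite, Set.ncard_eq_toFinset_card']

end PiecewiseConst

section Orbits

open Function

variable {G X κ R : Type*} [Group G] [MulAction G X] [Fintype κ] [AddCommMonoid R]

theorem MulAction.preimage_smul_orbit (g : G) (v : X) :
    (g • ·) ⁻¹' MulAction.orbit G v = MulAction.orbit G v := by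
  ext x
  simp only [Set.mem_preimage, ← MulAction.orbit_eq_iff, MulAction.orbit_smul]

theorem exists_eq_piecewiseConst_of_smul_invariant {O : κ → Set X}
    (hO : ∀ i, ∃ v, O i = MulAction.orbit G v) (hdisj : Pairwise (Disjoint on O))
    {F : X → R} (hF : ∀ (g : G) x, F (g • x) = F x) (hoff : ∀ x, (∀ i, x ∉ O i) → F x = 0) :
    ∃ b, F = piecewiseConst O b := by
  choose v hv using hO
  refine ⟨fun i => F (v i), funext fun x => ?_⟩
  by_cases hx : ∃ i, x ∈ O i
  · obtain ⟨i, hx⟩ := hx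
    rw [piecewiseConst_of_mem hdisj _ hx]
    obtain ⟨g, rfl⟩ := (hv i ▸ hx : x ∈ MulAction.orbit G (v i))
    exact hF g (v i)
  · rw [not_exists] at hx
    rw [hoff x hx, piecewiseConst_of_forall_notMem _ _ hx]

end Orbits

def orbitValue (α : Finset (Fin 4)) : Fin 5 → ZMod 2 :=
  Fin.snoc (fun j => if j ∈ α then 0 else 1) 0

@[simp]
theorem orbitValue_univ : orbitValue Finset.univ = 0 := by
  funext i
  refine Fin.lastCases ?_ (fun j => ?_) i <;> simp only [orbitValue, Fin.snoc_last,
    Fin.snoc_castSucc, Finset.mem_univ, if_true, Pi.zero_apply]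

theorem eq_orbitValue_filter (b : Fin 5 → ZMod 2) (hb : b (Fin.last 4) = 0) :
    b = orbitValue {j | b j.castSucc = 0} := by
  funext i
  refine Fin.lastCases ?_ (fun j => ?_) i
  · rw [hb, orbitValue, Fin.snoc_last]
  · simp only [orbitValue, Fin.snoc_castSucc, Finset.mem_filter, Finset.mem_univ, true_and]
    generalize b j.castSucc = z
    revert z; decide

section SegreOrbits

open Function

variable {O : Fin 5 → Set V8}

theorem sum_piecewiseConst_eq_last (hcard : (O 0).ncard = 12 ∧ (O 1).ncard = 54 ∧
      (O 2).ncard = 108 ∧ (O 3).ncard = 54 ∧ (O 4).ncard = 27) (b : Fin 5 → ZMod 2) :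
    ∑ x, piecewiseConst O b x = b (Fin.last 4) := by
  obtain ⟨h0, h1, h2, h3, h4⟩ := hcard
  rw [sum_piecewiseConst, Fin.sum_univ_five, h0, h1, h2, h3, h4]
  simp only [nsmul_eq_mul, Nat.cast_ofNat]
  reduce_mod_char
  simp [Fin.last]

theorem isInvFun_iff (horb : ∀ i, ∃ v : V8, O i = MulAction.orbit SegreStab v)
    (hdisj : Pairwise (Disjoint on O)) (hunion : (⋃ i, O i) = {x : V8 | x ≠ 0})
    (hsum : ∀ b : Fin 5 → ZMod 2, ∑ x, piecewiseConst O b x = b (Fin.last 4)) (F : V8 → ZMod 2) :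
    IsInvFun F ↔ ∃ α : Finset (Fin 4), α ≠ Finset.univ ∧ F = piecewiseConst O (orbitValue α) := by
  have hmem : ∀ x, (∃ i, x ∈ O i) ↔ x ≠ 0 := fun x => by
    simpa using Set.ext_iff.1 hunion x
  have hoff : ∀ x, (∀ i, x ∉ O i) → x = 0 := fun x hx =>
    not_not.1 ((hmem x).not.1 (not_exists.2 hx))
  constructor
  · rintro ⟨hF0, hFne, hFsum, hFinv⟩
    obtain ⟨b, rfl⟩ := exists_eq_piecewiseConst_of_smul_invariant horb hdisj
      (fun g x => hFinv g g.2 x) (fun x hx => hoff x hx ▸ hF0)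
    rw [eq_orbitValue_filter b ((hsum b).symm.trans hFsum)] at hFne ⊢
    refine ⟨_, fun huniv => hFne ?_, rfl⟩
    rw [huniv, orbitValue_univ]
    funext x; simp [piecewiseConst]
  · rintro ⟨α, hα, rfl⟩
    obtain ⟨j, -, hj⟩ := Finset.exists_of_ssubset (Finset.ssubset_univ_iff.2 hα)
    refine ⟨?_, ?_, ?_, ?_⟩
    · exact piecewiseConst_of_forall_notMem _ _ fun i h => (hmem 0).1 ⟨i, h⟩ rfl
    · obtain ⟨v, hv⟩ := horb j.castSucc
      have hvO : v ∈ O j.castSucc := hv ▸ MulAction.mem_orbit_self v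
      intro h
      have hv0 := congrFun h v
      rw [piecewiseConst_of_mem hdisj _ hvO] at hv0
      simp [orbitValue, hj] at hv0
    · rw [hsum, orbitValue, Fin.snoc_last]
    · intro A hA
      refine piecewiseConst_comp _ fun i => ?_
      obtain ⟨v, hv⟩ := horb i
      rw [hv]
      exact MulAction.preimage_smul_orbit (⟨A, hA⟩ : SegreStab) v

theorem zeroSet_piecewiseConst_orbitValue (hdisj : Pairwise (Disjoint on O))
    (hunion : (⋃ i, O i) = {x : V8 | x ≠ 0}) (α : Finset (Fin 4)) :
    {x : V8 | x ≠ 0 ∧ piecewiseConst O (orbitValue α) x = 0} = O 4 ∪ ⋃ i ∈ α, O i.castSucc := by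
  have hmem : ∀ x, (∃ i, x ∈ O i) ↔ x ≠ 0 := fun x => by
    simpa using Set.ext_iff.1 hunion x
  ext x
  simp only [Set.mem_ofPred_eq, Set.mem_union, Set.mem_iUnion, exists_prop]
  constructor
  · rintro ⟨hx0, hx⟩
    obtain ⟨i, hi⟩ := (hmem x).2 hx0
    rw [piecewiseConst_of_mem hdisj _ hi] at hx
    induction i using Fin.lastCases with
    | last => exact Or.inl hi
    | cast j => exact Or.inr ⟨j, by simpa [orbitValue] using hx, hi⟩
  · rintro (hx | ⟨j, hj, hx⟩)
    · exact ⟨(hmem x).1 ⟨_, hx⟩, by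
        rw [piecewiseConst_of_mem hdisj _ hx]; exact Fin.snoc_last (α := fun _ => ZMod 2) _ _⟩
    · exact ⟨(hmem x).1 ⟨_, hx⟩, by
        rw [piecewiseConst_of_mem hdisj _ hx]; simp [orbitValue, hj]⟩

theorem piecewiseConst_orbitValue_injective (hdisj : Pairwise (Disjoint on O))
    (hne : ∀ i, (O i).Nonempty) : Injective fun α => piecewiseConst O (orbitValue α) := by
  intro α β h
  ext j
  obtain ⟨x, hx⟩ := hne j.castSucc
  have hjx := congrFun h x
  simp only [piecewiseConst_of_mem hdisj _ hx, orbitValue, Fin.snoc_castSucc] at hjx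
  split_ifs at hjx <;> simp_all

end SegreOrbits

theorem stmt19_general (O : Fin 5 → Set V8)
    (horb : ∀ i, ∃ v : V8, O i = MulAction.orbit SegreStab v)
    (hdisj : ∀ i j, i ≠ j → Disjoint (O i) (O j))
    (hunion : (⋃ i, O i) = {x : V8 | x ≠ 0})
    (hcard : (O 0).ncard = 12 ∧ (O 1).ncard = 54 ∧ (O 2).ncard = 108 ∧
      (O 3).ncard = 54 ∧ (O 4).ncard = 27) :
    {c : Finset ι3 → ZMod 2 | IsInvPoly c}.ncard = 15 ∧
    (∀ c : Finset ι3 → ZMod 2, IsInvPoly c →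
      ∃ α : Finset (Fin 4), α ≠ Finset.univ ∧
        {x : V8 | x ≠ 0 ∧ mEval c x = 0} = O 4 ∪ ⋃ i ∈ α, O i.castSucc) ∧
    (∀ α : Finset (Fin 4), α ≠ Finset.univ →
      ∃ c : Finset ι3 → ZMod 2, IsInvPoly c ∧
        {x : V8 | x ≠ 0 ∧ mEval c x = 0} = O 4 ∪ ⋃ i ∈ α, O i.castSucc) := by
  let P (α : Finset (Fin 4)) : Finset ι3 → ZMod 2 :=
    (Equiv.ofBijective _ mEval_bijective).symm (piecewiseConst O (orbitValue α))
  have hP (α : Finset (Fin 4)) : mEval (P α) = piecewiseConst O (orbitValue α) :=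
    Equiv.ofBijective_apply_symm_apply _ _ _
  have hinv (c : Finset ι3 → ZMod 2) : IsInvPoly c ↔ ∃ α ≠ Finset.univ, c = P α := by
    simp only [isInvPoly_iff_isInvFun, isInvFun_iff horb hdisj hunion
      (sum_piecewiseConst_eq_last hcard), ← hP, mEval_injective.eq_iff]
  have hzero (α : Finset (Fin 4)) :
      {x : V8 | x ≠ 0 ∧ mEval (P α) x = 0} = O 4 ∪ ⋃ i ∈ α, O i.castSucc := by
    rw [hP]; exact zeroSet_piecewiseConst_orbitValue hdisj hunion α
  have hPinj : Function.Injective P := fun α β h =>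
    piecewiseConst_orbitValue_injective hdisj
      (fun i => (horb i).elim fun v hv => hv ▸ MulAction.nonempty_orbit v)
      (by simpa only [hP] using congrArg mEval h)
  refine ⟨?_, fun c hc => ?_, fun α hα => ⟨P α, (hinv _).2 ⟨α, hα, rfl⟩, hzero α⟩⟩
  · have hset : {c | IsInvPoly c} = P '' {α | α ≠ Finset.univ} := by
      ext c; simp [hinv, eq_comm]
    rw [hset, Set.ncard_image_of_injective _ hPinj, Set.ncard_eq_toFinset_card']
    rfl
  · obtain ⟨α, hα, rfl⟩ := (hinv c).1 hc
    exact ⟨α, hα, hzero α⟩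

/-- Given the five point-orbits `O 0, …, O 4` of the stabilizer `G_S` (of sizes
12, 54, 108, 54, 27, with `O 4 = S`), there are exactly fifteen nonzero squarefree
invariant polynomials of degree `< 8`, and their zero sets among nonzero vectors are
precisely the unions `O 4 ∪ ⋃_{i ∈ α} O i` over the proper subsets `α ⊊ {0,1,2,3}`. -/
theorem stmt19 (O : Fin 5 → Set V8)
    (horb : ∀ i, ∃ v : V8, O i = MulAction.orbit SegreStab v)
    (hdisj : ∀ i j, i ≠ j → Disjoint (O i) (O j))
    (hunion : (⋃ i, O i) = {x : V8 | x ≠ 0})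
    (hcard : (O 0).ncard = 12 ∧ (O 1).ncard = 54 ∧ (O 2).ncard = 108 ∧
      (O 3).ncard = 54 ∧ (O 4).ncard = 27)
    (hS : O 4 = Segre) :
    {c : Finset ι3 → ZMod 2 | IsInvPoly c}.ncard = 15 ∧
    (∀ c : Finset ι3 → ZMod 2, IsInvPoly c →
      ∃ α : Finset (Fin 4), α ≠ Finset.univ ∧
        {x : V8 | x ≠ 0 ∧ mEval c x = 0} = O 4 ∪ ⋃ i ∈ α, O i.castSucc) ∧
    (∀ α : Finset (Fin 4), α ≠ Finset.univ →
      ∃ c : Finset ι3 → ZMod 2, IsInvPoly c ∧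
        {x : V8 | x ≠ 0 ∧ mEval c x = 0} = O 4 ∪ ⋃ i ∈ α, O i.castSucc) :=
  stmt19_general O horb hdisj hunion hcard
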